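/- Let $G(r,t) = (4\pi t)^{-3/2} e^{-t} \frac{r}{\sinh r} e^{-r^2/(4t)}$. Then for every $\varepsilon > 0$ there exist $k > 0$ and $T > 0$ such that for all $t \ge T$: $\int_{2t - k\sqrt{t}}^{2t + k\sqrt{t}} 4\pi (\sinh r)^2\, G(r,t)\, dr \ge 1 - \varepsilon$. That is, for large times most of the mass of the fundamental solution of the heat equation on $\mathbb{H}^3$ is located in the thin annulus $\{2t - k\sqrt{t} \le r \le 2t + k\sqrt{t}\}$ around the mass line $r = 2t$. -/

import Mathlib

/-! Completing the square, `-t - r²/(4t) + r = -(r - 2t)²/(4t)`, shows that the radial density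
`4π sinh² r · G(r,t)` is the normal density with mean and variance `2t` times the factor
`(r / 2t)(1 - e^{-2r})`. On the annulus this factor is at least its value at the inner radius,
which tends to `1`, while the normal mass of `[2t - k√t, 2t + k√t]` is independent of `t` and
tends to `1` as `k → ∞`. -/

open Real Filter MeasureTheory

noncomputable def hypHeatKernel (r t : ℝ) : ℝ :=
  (4 * π * t) ^ (-(3 : ℝ) / 2) * Real.exp (-t) * (r / Real.sinh r) *
    Real.exp (-r ^ 2 / (4 * t))

open Topology Set

lemma rpow_neg_three_halves {x : ℝ} (hx : 0 ≤ x) : x ^ (-(3 : ℝ) / 2) = (x * √x)⁻¹ := by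
  rw [show -(3 : ℝ) / 2 = -(1 + 1 / 2) by norm_num, rpow_neg hx, rpow_add' hx (by norm_num),
    rpow_one, ← sqrt_eq_rpow]

lemma four_pi_sinh_sq_mul_hypHeatKernel {t : ℝ} (ht : 0 < t) (r : ℝ) :
    4 * π * sinh r ^ 2 * hypHeatKernel r t =
      r / (2 * t) * (1 - exp (-(2 * r))) *
        ((√(4 * π * t))⁻¹ * exp (-(r - 2 * t) ^ 2 / (4 * t))) := by
  rcases eq_or_ne r 0 with rfl | hr
  · simp
  have hs : sinh r ≠ 0 := sinh_ne_zero.2 hr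
  have hexp : exp (-(r - 2 * t) ^ 2 / (4 * t)) = exp r * exp (-t) * exp (-r ^ 2 / (4 * t)) := by
    rw [← exp_add, ← exp_add]; congr 1; field_simp; ring
  have hπt : 0 < 4 * π * t := by positivity
  rw [hypHeatKernel, rpow_neg_three_halves hπt.le, hexp, sinh_eq]
  field_simp
  rw [mul_one_sub, ← exp_add]
  ring_nf

lemma integral_exp_neg_sq_div_sq (m c : ℝ) {s : ℝ} (hs : 0 < s) :
    ∫ x in (m - c * s)..(m + c * s), exp (-(x - m) ^ 2 / s ^ 2) =
      s * ∫ u in (-c)..c, exp (-u ^ 2) := by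
  have := intervalIntegral.integral_comp_mul_add (a := -c) (b := c)
      (fun x => exp (-(x - m) ^ 2 / s ^ 2)) hs.ne' m
  have hstd (u : ℝ) : exp (-(s * u + m - m) ^ 2 / s ^ 2) = exp (-u ^ 2) := by
    congr 1; field_simp; ring
  simp only [hstd, smul_eq_mul, show s * -c + m = m - c * s by ring,
    show s * c + m = m + c * s by ring] at this
  rw [this, mul_inv_cancel_left₀ hs.ne']

lemma tendsto_inv_sqrt_pi_mul_integral_exp_neg_sq :
    Tendsto (fun c : ℝ => (√π)⁻¹ * ∫ u in (-c)..c, exp (-u ^ 2)) atTop (𝓝 1) := by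
  have h := intervalIntegral_tendsto_integral (integrable_exp_neg_mul_sq one_pos)
    tendsto_neg_atTop_atBot tendsto_id
  rw [integral_gaussian, div_one] at h
  simpa [inv_mul_cancel₀ (sqrt_pos.2 pi_pos).ne'] using h.const_mul (√π)⁻¹

lemma tendsto_two_mul_sub_mul_sqrt_atTop (k : ℝ) :
    Tendsto (fun t => 2 * t - k * √t) atTop atTop := by
  have h : Tendsto (fun t => √t * (2 * √t - k)) atTop atTop :=
    tendsto_sqrt_atTop.atTop_mul_atTop₀
      (tendsto_atTop_add_const_right _ (-k) (tendsto_sqrt_atTop.const_mul_atTop two_pos))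
  refine h.congr' ((eventually_ge_atTop 0).mono fun t ht => ?_)
  rw [mul_sub, mul_left_comm, mul_self_sqrt ht]
  ring

lemma tendsto_annulus_lower_factor (k : ℝ) :
    Tendsto (fun t => (2 * t - k * √t) / (2 * t) * (1 - exp (-(2 * (2 * t - k * √t)))))
      atTop (𝓝 1) := by
  have hratio : Tendsto (fun t => 1 - k / (2 * √t)) atTop (𝓝 1) := by
    simpa using tendsto_const_nhds.sub
      ((tendsto_sqrt_atTop.const_mul_atTop two_pos).const_div_atTop k)
  have hexp : Tendsto (fun t => 1 - exp (-(2 * (2 * t - k * √t)))) atTop (𝓝 1) := by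
    simpa using tendsto_const_nhds.sub (tendsto_exp_neg_atTop_nhds_zero.comp
      ((tendsto_two_mul_sub_mul_sqrt_atTop k).const_mul_atTop two_pos))
  have h := hratio.mul hexp
  rw [one_mul] at h
  refine h.congr' ((eventually_gt_atTop 0).mono fun t ht => ?_)
  congr 1
  have := sqrt_pos.2 ht
  field_simp
  linear_combination k * mul_self_sqrt ht.le

lemma le_integral_annulus_hypHeatKernel {t c : ℝ} (ht : 0 < t) (hc : 0 ≤ c)
    (ha : 0 ≤ 2 * t - 2 * c * √t) :
    (2 * t - 2 * c * √t) / (2 * t) * (1 - exp (-(2 * (2 * t - 2 * c * √t)))) *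
        ((√π)⁻¹ * ∫ u in (-c)..c, exp (-u ^ 2)) ≤
      ∫ r in Icc (2 * t - 2 * c * √t) (2 * t + 2 * c * √t),
        4 * π * sinh r ^ 2 * hypHeatKernel r t := by
  set a := 2 * t - 2 * c * √t
  set b := 2 * t + 2 * c * √t
  have hab : a ≤ b := by have := sqrt_nonneg t; nlinarith
  set g : ℝ → ℝ := fun r => (√(4 * π * t))⁻¹ * exp (-(r - 2 * t) ^ 2 / (4 * t))
  have hgauss : ∫ r in a..b, g r = (√π)⁻¹ * ∫ u in (-c)..c, exp (-u ^ 2) := by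
    have h := integral_exp_neg_sq_div_sq (2 * t) c (s := 2 * √t) (by positivity)
    rw [mul_pow, sq_sqrt ht.le, ← mul_assoc, mul_comm c, show (2 : ℝ) ^ 2 * t = 4 * t by ring]
      at h
    have hsqrt : √(4 * π * t) = √π * (2 * √t) := by
      rw [show 4 * π * t = π * (2 * √t) ^ 2 by rw [mul_pow, sq_sqrt ht.le]; ring,
        sqrt_mul pi_pos.le, sqrt_sq (by positivity)]
    have := sqrt_pos.2 ht
    rw [intervalIntegral.integral_const_mul, h, hsqrt]
    field_simp
  have hlower : ∀ r ∈ Icc a b,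
      a / (2 * t) * (1 - exp (-(2 * a))) * g r ≤ r / (2 * t) * (1 - exp (-(2 * r))) * g r := by
    rintro r ⟨har, -⟩
    have : exp (-(2 * r)) ≤ exp (-(2 * a)) := exp_le_exp.2 (by linarith)
    have : exp (-(2 * a)) ≤ 1 := exp_le_one_iff.2 (by linarith)
    gcongr
    exact div_nonneg (ha.trans har) (by positivity)
  simp_rw [four_pi_sinh_sq_mul_hypHeatKernel ht]
  rw [integral_Icc_eq_integral_Ioc, ← intervalIntegral.integral_of_le hab, ← hgauss,
    ← intervalIntegral.integral_const_mul]
  exact intervalIntegral.integral_mono_on hab (Continuous.intervalIntegrable (by fun_prop) _ _)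
    (Continuous.intervalIntegrable (by fun_prop) _ _) hlower

/-- For large times most of the mass of the fundamental solution on `ℍ³` lies in the
thin annulus `{2t - k√t ≤ r ≤ 2t + k√t}` around the mass line `r = 2t`. -/
theorem hypHeatKernel_mass_concentration :
    ∀ ε > (0 : ℝ), ∃ k > (0 : ℝ), ∃ T > (0 : ℝ), ∀ t ≥ T,
      1 - ε ≤ ∫ r in Set.Icc (2 * t - k * Real.sqrt t) (2 * t + k * Real.sqrt t),
        4 * π * (Real.sinh r) ^ 2 * hypHeatKernel r t := by
  intro ε hε
  obtain ⟨c, hc_mass, hc_pos⟩ : ∃ c, 1 - ε < (√π)⁻¹ * (∫ u in (-c)..c, exp (-u ^ 2)) ∧ 0 < c :=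
    ((tendsto_inv_sqrt_pi_mul_integral_exp_neg_sq.eventually (lt_mem_nhds (by linarith))).and
      (eventually_gt_atTop 0)).exists
  have hlim := (tendsto_annulus_lower_factor (2 * c)).mul_const
    ((√π)⁻¹ * ∫ u in (-c)..c, exp (-u ^ 2))
  rw [one_mul] at hlim
  obtain ⟨T, hT⟩ := eventually_atTop.1 <| (hlim.eventually (lt_mem_nhds hc_mass)).and
    ((tendsto_two_mul_sub_mul_sqrt_atTop (2 * c)).eventually_ge_atTop 0)
  refine ⟨2 * c, by positivity, max T 1, by positivity, fun t ht => ?_⟩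
  obtain ⟨hlt, ha⟩ := hT t (le_of_max_le_left ht)
  have ht_pos : 0 < t := zero_lt_one.trans_le (le_of_max_le_right ht)
  exact hlt.le.trans (le_integral_annulus_hypHeatKernel ht_pos hc_pos.le ha)
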